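/- arXiv:2511.10425 — 4 statements merged into one kernel-verified Lean document; each statement's English description precedes it below -/
import Mathlib

section
/- Let S ⊆ ℝⁿ be a nonempty convex set, L > 0, ν ∈ (0,1], and h a convex differentiable function whose gradient is (ν,L)-Hölder continuous on S. For x, y ∈ S, define d_{x,y} := ‖∇h(y) − ∇h(x)‖^{(1−ν)/ν}(∇h(y) − ∇h(x)). If y − d_{x,y}/L^{1/ν} ∈ S, then h(y) ≥ h(x) + ⟨∇h(x), y − x⟩ + (ν/((1+ν)L^{1/ν}))‖∇h(y) − ∇h(x)‖^{(1+ν)/ν}. -/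
/-!
Evaluate the two first-order bounds at the point `z = y - d_{x,y} / L^{1/ν}`: convexity gives
`h z ≥ h x + ⟪∇h x, z - x⟫`, and the Hölder continuity of the gradient gives the descent bound
`h z ≤ h y + ⟪∇h y, z - y⟫ + L/(1+ν) ‖z - y‖^{1+ν}`. Subtracting, `h y - h x - ⟪∇h x, y - x⟫` is at
least `⟪∇h y - ∇h x, y - z⟫ - L/(1+ν) ‖y - z‖^{1+ν}`, and the step `y - z` is the maximiser of
this concave expression, where it takes the value `ν/((1+ν) L^{1/ν}) ‖∇h y - ∇h x‖^{(1+ν)/ν}`.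
-/

open Set AffineMap
open scoped InnerProductSpace

section Gradient

variable {E : Type*} [NormedAddCommGroup E] [InnerProductSpace ℝ E] [CompleteSpace E]

theorem HasGradientAt.hasDerivAt_comp_lineMap {f : E → ℝ} {f' a b : E} {t : ℝ}
    (hf : HasGradientAt f f' (lineMap a b t)) :
    HasDerivAt (fun s : ℝ => f (lineMap a b s)) ⟪f', b - a⟫_ℝ t :=
  (hasGradientAt_iff_hasFDerivAt.mp hf).comp_hasDerivAt t hasDerivAt_lineMap

theorem ConvexOn.add_inner_gradient_le {s : Set E} {f : E → ℝ} {f' x y : E}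
    (hf : ConvexOn ℝ s f) (hx : x ∈ s) (hy : y ∈ s) (hf' : HasGradientAt f f' x) :
    f x + ⟪f', y - x⟫_ℝ ≤ f y := by
  have hline : ConvexOn ℝ (lineMap x y ⁻¹' s) (f ∘ lineMap x y) := hf.comp_affineMap _
  have hslope := hline.le_slope_of_hasDerivAt (x := 0) (y := 1) (by simpa using hx)
    (by simpa using hy) zero_lt_one (HasGradientAt.hasDerivAt_comp_lineMap (by simpa using hf'))
  simp only [slope, sub_zero, inv_one, Function.comp_apply, lineMap_apply_one,
    lineMap_apply_zero, vsub_eq_sub, smul_eq_mul, one_mul] at hslope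
  linarith

theorem apply_le_add_inner_add_rpow_of_holder {s : Set E} (hs : Convex ℝ s) {L ν : ℝ}
    (hν : 0 ≤ ν) {f : E → ℝ} {g : E → E} (hf : ∀ x ∈ s, HasGradientAt f (g x) x)
    (hg : ∀ x ∈ s, ∀ y ∈ s, ‖g x - g y‖ ≤ L * ‖x - y‖ ^ ν) {x y : E} (hx : x ∈ s)
    (hy : y ∈ s) :
    f y ≤ f x + ⟪g x, y - x⟫_ℝ + L / (1 + ν) * ‖y - x‖ ^ (1 + ν) := by
  set v := y - x
  have hp : ∀ t ∈ Icc (0 : ℝ) 1, lineMap x y t ∈ s := fun t ht => hs.lineMap_mem hx hy ht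
  have hderiv : ∀ t ∈ Icc (0 : ℝ) 1,
      HasDerivAt (fun t => f (lineMap x y t)) ⟪g (lineMap x y t), v⟫_ℝ t :=
    fun t ht => (hf _ (hp t ht)).hasDerivAt_comp_lineMap
  set B : ℝ → ℝ := fun t => f x + t * ⟪g x, v⟫_ℝ + L / (1 + ν) * ‖v‖ ^ (1 + ν) * t ^ (1 + ν)
  have hB : ∀ t, HasDerivAt B (⟪g x, v⟫_ℝ + L * ‖v‖ ^ (1 + ν) * t ^ ν) t := by
    intro t
    refine ((((hasDerivAt_id t).mul_const ⟪g x, v⟫_ℝ).const_add (f x)).add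
      ((Real.hasDerivAt_rpow_const (p := 1 + ν) (Or.inr (by linarith))).const_mul
        (L / (1 + ν) * ‖v‖ ^ (1 + ν)))).congr_deriv ?_
    field_simp
    simp
  have hbound : ∀ t ∈ Ico (0 : ℝ) 1,
      ⟪g (lineMap x y t), v⟫_ℝ ≤ ⟪g x, v⟫_ℝ + L * ‖v‖ ^ (1 + ν) * t ^ ν := by
    intro t ht
    have hdist : ‖lineMap x y t - x‖ = t * ‖v‖ := by
      rw [← dist_eq_norm, dist_lineMap_left, Real.norm_of_nonneg ht.1, dist_eq_norm']
    calc ⟪g (lineMap x y t), v⟫_ℝ = ⟪g x, v⟫_ℝ + ⟪g (lineMap x y t) - g x, v⟫_ℝ := by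
          rw [inner_sub_left]; ring
      _ ≤ ⟪g x, v⟫_ℝ + ‖g (lineMap x y t) - g x‖ * ‖v‖ := by
          gcongr; exact real_inner_le_norm _ _
      _ ≤ ⟪g x, v⟫_ℝ + L * (t * ‖v‖) ^ ν * ‖v‖ := by
          gcongr; simpa [hdist] using hg _ (hp t (Ico_subset_Icc_self ht)) x hx
      _ = ⟪g x, v⟫_ℝ + L * ‖v‖ ^ (1 + ν) * t ^ ν := by
          rw [Real.mul_rpow ht.1 (norm_nonneg _), Real.rpow_one_add' (norm_nonneg _) (by linarith)]
          ring
  have key := image_le_of_deriv_right_le_deriv_boundary (a := 0) (b := 1)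
    (fun t ht => (hderiv t ht).continuousAt.continuousWithinAt)
    (fun t ht => (hderiv t (Ico_subset_Icc_self ht)).hasDerivWithinAt)
    (B := B) (by simp [B, Real.zero_rpow (by linarith : (1 : ℝ) + ν ≠ 0)])
    (fun t _ => (hB t).continuousAt.continuousWithinAt) (fun t _ => (hB t).hasDerivWithinAt)
    hbound (right_mem_Icc.mpr zero_le_one)
  simpa [B] using key

theorem ConvexOn.add_inner_add_inner_sub_rpow_le {s : Set E} {L ν : ℝ} {f : E → ℝ} {g : E → E}
    (hf : ConvexOn ℝ s f) (hν : 0 ≤ ν) (hgrad : ∀ x ∈ s, HasGradientAt f (g x) x)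
    (hg : ∀ x ∈ s, ∀ y ∈ s, ‖g x - g y‖ ≤ L * ‖x - y‖ ^ ν) {x y z : E} (hx : x ∈ s)
    (hy : y ∈ s) (hz : z ∈ s) :
    f x + ⟪g x, y - x⟫_ℝ + (⟪g y - g x, y - z⟫_ℝ - L / (1 + ν) * ‖y - z‖ ^ (1 + ν)) ≤ f y := by
  have hlower := hf.add_inner_gradient_le hx hz (hgrad x hx)
  have hupper := apply_le_add_inner_add_rpow_of_holder hf.1 hν hgrad hg hy hz
  have hinner : ⟪g x, z - x⟫_ℝ - ⟪g y, z - y⟫_ℝ = ⟪g x, y - x⟫_ℝ + ⟪g y - g x, y - z⟫_ℝ := by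
    rw [show z - x = (y - x) + (z - y) by abel, show y - z = -(z - y) by abel, inner_add_right,
      inner_neg_right, inner_sub_left]
    ring
  rw [norm_sub_rev] at hupper
  linarith

end Gradient

/-- `d_{x,y} / L^{1/ν} = holderStep L ν ‖u‖ • u` for `u = ∇h(y) - ∇h(x)`. -/
noncomputable def holderStep (L ν r : ℝ) : ℝ :=
  (L ^ (1 / ν))⁻¹ * r ^ ((1 - ν) / ν)

section HolderStep

variable {L ν r : ℝ}

theorem holderStep_nonneg (hL : 0 ≤ L) (hr : 0 ≤ r) : 0 ≤ holderStep L ν r := by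
  unfold holderStep
  positivity

theorem holderStep_mul_self (hν : 0 < ν) (hr : 0 ≤ r) :
    holderStep L ν r * r = (L ^ (1 / ν))⁻¹ * r ^ (1 / ν) := by
  have hexp : (1 - ν) / ν + 1 = 1 / ν := by field_simp; ring
  rw [holderStep, mul_assoc, ← Real.rpow_add_one' hr (by rw [hexp]; positivity), hexp]

theorem mul_rpow_holderStep_mul_self (hL : 0 < L) (hν : 0 < ν) (hr : 0 ≤ r) :
    L * (holderStep L ν r * r) ^ ν = r := by
  rw [holderStep_mul_self hν hr, Real.mul_rpow (by positivity) (by positivity),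
    Real.inv_rpow (by positivity), ← Real.rpow_mul hL.le, ← Real.rpow_mul hr,
    one_div_mul_cancel hν.ne', Real.rpow_one, Real.rpow_one, mul_inv_cancel_left₀ hL.ne']

theorem holderStep_mul_sq (hν : 0 < ν) (hr : 0 ≤ r) :
    holderStep L ν r * r ^ 2 = (L ^ (1 / ν))⁻¹ * r ^ ((1 + ν) / ν) := by
  have hexp : 1 / ν + 1 = (1 + ν) / ν := by field_simp
  rw [sq, ← mul_assoc, holderStep_mul_self hν hr, mul_assoc,
    ← Real.rpow_add_one' hr (by rw [hexp]; positivity), hexp]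

theorem holderStep_gain (hL : 0 < L) (hν : 0 < ν) (hr : 0 ≤ r) :
    holderStep L ν r * r ^ 2 - L / (1 + ν) * (holderStep L ν r * r) ^ (1 + ν) =
      ν / ((1 + ν) * L ^ (1 / ν)) * r ^ ((1 + ν) / ν) := by
  have hs := holderStep_nonneg (ν := ν) hL.le hr
  have hpenalty : L / (1 + ν) * (holderStep L ν r * r) ^ (1 + ν) =
      holderStep L ν r * r ^ 2 / (1 + ν) := by
    rw [Real.rpow_one_add' (by positivity) (by positivity)]
    calc L / (1 + ν) * (holderStep L ν r * r * (holderStep L ν r * r) ^ ν)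
        = holderStep L ν r * r * (L * (holderStep L ν r * r) ^ ν) / (1 + ν) := by ring
      _ = holderStep L ν r * r ^ 2 / (1 + ν) := by
        rw [mul_rpow_holderStep_mul_self hL hν hr]; ring
  rw [hpenalty, holderStep_mul_sq hν hr]
  field_simp
  ring

end HolderStep

theorem stmt2_general {n : ℕ} (S : Set (EuclideanSpace ℝ (Fin n)))
    (L ν : ℝ) (hL : 0 < L) (hν : ν ∈ Set.Ioc (0 : ℝ) 1)
    (h : EuclideanSpace ℝ (Fin n) → ℝ)
    (g : EuclideanSpace ℝ (Fin n) → EuclideanSpace ℝ (Fin n))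
    (hgrad : ∀ x ∈ S, HasGradientAt h (g x) x)
    (hconv : ConvexOn ℝ S h)
    (hhold : ∀ x ∈ S, ∀ y ∈ S, ‖g x - g y‖ ≤ L * ‖x - y‖ ^ ν)
    (x y : EuclideanSpace ℝ (Fin n)) (hx : x ∈ S) (hy : y ∈ S)
    (hmem : y - (L ^ (1 / ν))⁻¹ • (‖g y - g x‖ ^ ((1 - ν) / ν) • (g y - g x)) ∈ S) :
    h y ≥ h x + ⟪g x, y - x⟫_ℝ +
      ν / ((1 + ν) * L ^ (1 / ν)) * ‖g y - g x‖ ^ ((1 + ν) / ν) := by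
  set u := g y - g x
  have hz : y - holderStep L ν ‖u‖ • u ∈ S := by rwa [holderStep, ← smul_smul]
  have key := hconv.add_inner_add_inner_sub_rpow_le hν.1.le hgrad hhold hx hy hz
  rwa [sub_sub_cancel, real_inner_smul_right, real_inner_self_eq_norm_sq, norm_smul,
    Real.norm_of_nonneg (holderStep_nonneg hL.le (norm_nonneg u)),
    holderStep_gain hL hν.1 (norm_nonneg u)] at key

theorem stmt2 {n : ℕ} (S : Set (EuclideanSpace ℝ (Fin n))) (hSne : S.Nonempty)
    (hSconv : Convex ℝ S) (L ν : ℝ) (hL : 0 < L) (hν : ν ∈ Set.Ioc (0 : ℝ) 1)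
    (h : EuclideanSpace ℝ (Fin n) → ℝ)
    (g : EuclideanSpace ℝ (Fin n) → EuclideanSpace ℝ (Fin n))
    (hgrad : ∀ x ∈ S, HasGradientAt h (g x) x)
    (hconv : ConvexOn ℝ S h)
    (hhold : ∀ x ∈ S, ∀ y ∈ S, ‖g x - g y‖ ≤ L * ‖x - y‖ ^ ν)
    (x y : EuclideanSpace ℝ (Fin n)) (hx : x ∈ S) (hy : y ∈ S)
    (hmem : y - (L ^ (1 / ν))⁻¹ • (‖g y - g x‖ ^ ((1 - ν) / ν) • (g y - g x)) ∈ S) :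
    h y ≥ h x + ⟪g x, y - x⟫_ℝ +
      ν / ((1 + ν) * L ^ (1 / ν)) * ‖g y - g x‖ ^ ((1 + ν) / ν) :=
  stmt2_general S L ν hL hν h g hgrad hconv hhold x y hx hy hmem
end

section
/- Let h : ℝⁿ → ℝ be continuously differentiable and locally strongly convex (for every x there exist δₓ > 0 and μₓ > 0 such that h is μₓ-strongly convex on B(x; δₓ)), and let S ⊆ ℝⁿ be a nonempty convex compact set. Then there exists μ > 0 such that h is μ-strongly convex on S. -/
/-!
First-order strong convexity with respect to `g` is equivalent to strong monotonicity of `g`,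
`μ ‖y - x‖² ≤ ⟪g y - g x, y - x⟫`: one direction adds the inequalities at `(x, y)` and `(y, x)`,
the other integrates along the segment `[x, y]`. By compactness a single `ε > 0` serves as both
radius and modulus of strong monotonicity on the balls `ball x ε`, `x ∈ S`. Along a segment,
strong monotonicity is additive over a subdivision, so on the convex set `S` it passes from
short pairs to all pairs.
-/

open Set Metric
open scoped InnerProductSpace

/-- `h` is `μ`-strongly convex on `C` (first-order characterization via the gradient `g`). -/
def StrongConvexOnSet {n : ℕ} (h : EuclideanSpace ℝ (Fin n) → ℝ)
    (g : EuclideanSpace ℝ (Fin n) → EuclideanSpace ℝ (Fin n))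
    (μ : ℝ) (C : Set (EuclideanSpace ℝ (Fin n))) : Prop :=
  ∀ x ∈ C, ∀ y ∈ C, h y ≥ h x + ⟪g x, y - x⟫_ℝ + μ / 2 * ‖y - x‖ ^ 2

open Filter Topology

theorem le_of_forall_le_of_sub_lt {ψ : ℝ → ℝ} {a b δ : ℝ} (hab : a ≤ b) (hδ : 0 < δ)
    (hψ : ∀ s ∈ Icc a b, ∀ u ∈ Icc a b, s ≤ u → u - s < δ → ψ s ≤ ψ u) : ψ a ≤ ψ b := by
  obtain ⟨N, hN⟩ := exists_nat_gt ((b - a) / δ)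
  have hNpos : (0 : ℝ) < N := (div_nonneg (sub_nonneg.2 hab) hδ.le).trans_lt hN
  set d := (b - a) / N with hd
  have hd0 : 0 ≤ d := div_nonneg (sub_nonneg.2 hab) hNpos.le
  have hdδ : d < δ := by
    rw [hd, div_lt_iff₀ hNpos]
    rwa [div_lt_iff₀ hδ, mul_comm] at hN
  have hNd : a + N * d = b := by
    rw [hd, mul_div_cancel₀ _ hNpos.ne']
    ring
  have hmem : ∀ k : ℕ, k ≤ N → a + k * d ∈ Icc a b := fun k hk =>
    ⟨le_add_of_nonneg_right (by positivity), hNd ▸ by gcongr⟩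
  have hchain : ∀ k : ℕ, k ≤ N → ψ a ≤ ψ (a + k * d) := by
    intro k
    induction k with
    | zero => simp
    | succ k ih =>
      intro hk
      refine (ih (by omega)).trans (hψ _ (hmem k (by omega)) _ (hmem (k + 1) hk) ?_ ?_)
      · push_cast
        nlinarith
      · push_cast
        linarith
  simpa [hNd] using hchain N le_rfl

section InnerProductSpace

variable {E : Type*} [NormedAddCommGroup E] [InnerProductSpace ℝ E]

def StrongMonotoneOn (g : E → E) (μ : ℝ) (C : Set E) : Prop :=
  ∀ x ∈ C, ∀ y ∈ C, μ * ‖y - x‖ ^ 2 ≤ ⟪g y - g x, y - x⟫_ℝ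

variable {g : E → E} {μ ν : ℝ} {C D : Set E}

theorem strongMonotoneOn_of_strongConvex {h : E → ℝ}
    (hh : ∀ x ∈ C, ∀ y ∈ C, h y ≥ h x + ⟪g x, y - x⟫_ℝ + μ / 2 * ‖y - x‖ ^ 2) :
    StrongMonotoneOn g μ C := by
  intro x hx y hy
  have hxy := hh x hx y hy
  have hyx := hh y hy x hx
  rw [← neg_sub y x, inner_neg_right, norm_neg] at hyx
  rw [inner_sub_left]
  linarith

namespace StrongMonotoneOn

theorem mono (hg : StrongMonotoneOn g μ C) (hνμ : ν ≤ μ) (hDC : D ⊆ C) :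
    StrongMonotoneOn g ν D := fun x hx y hy =>
  (mul_le_mul_of_nonneg_right hνμ (by positivity)).trans (hg x (hDC hx) y (hDC hy))

theorem mul_le_inner (hg : StrongMonotoneOn g μ C) {x y v : E} {t : ℝ} (hx : x ∈ C)
    (hy : y ∈ C) (hxy : y - x = t • v) (ht : 0 < t) :
    μ * t * ‖v‖ ^ 2 ≤ ⟪g y - g x, v⟫_ℝ := by
  have hpair := hg x hx y hy
  rw [hxy, norm_smul, real_inner_smul_right, Real.norm_of_nonneg ht.le] at hpair
  refine le_of_mul_le_mul_left ?_ ht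
  linarith

theorem of_forall_inter_ball (hC : Convex ℝ C) {δ : ℝ} (hδ : 0 < δ)
    (hg : ∀ x ∈ C, StrongMonotoneOn g μ (C ∩ ball x δ)) : StrongMonotoneOn g μ C := by
  intro x hx y hy
  set v := y - x
  have hxv : x + v = y := add_sub_cancel x y
  set ψ : ℝ → ℝ := fun s => ⟪g (x + s • v), v⟫_ℝ - μ * s * ‖v‖ ^ 2
  have hseg : ∀ s ∈ Icc (0 : ℝ) 1, x + s • v ∈ C := fun s hs => hC.add_smul_sub_mem hx hy hs
  have hψ : ψ 0 ≤ ψ 1 := by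
    refine le_of_forall_le_of_sub_lt zero_le_one (div_pos hδ (by positivity : 0 < ‖v‖ + 1)) ?_
    intro s hs u hu hsu hus
    rcases hsu.eq_or_lt with rfl | hlt
    · rfl
    have hdiff : x + u • v - (x + s • v) = (u - s) • v := by module
    have hclose : x + u • v ∈ ball (x + s • v) δ := by
      rw [mem_ball, dist_eq_norm, hdiff, norm_smul, Real.norm_of_nonneg (sub_nonneg.2 hsu)]
      calc (u - s) * ‖v‖ ≤ (u - s) * (‖v‖ + 1) := by gcongr; linarith
        _ < δ := (lt_div_iff₀ (by positivity)).1 hus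
    have hstep := (hg _ (hseg s hs)).mul_le_inner ⟨hseg s hs, mem_ball_self hδ⟩
      ⟨hseg u hu, hclose⟩ hdiff (sub_pos.2 hlt)
    simp only [ψ, inner_sub_left] at hstep ⊢
    nlinarith
  simp only [ψ, zero_smul, add_zero, one_smul, hxv] at hψ
  rw [inner_sub_left]
  linarith

theorem strongConvex [CompleteSpace E] {h : E → ℝ} (hg : StrongMonotoneOn g μ C)
    (hC : Convex ℝ C) (hgrad : ∀ x ∈ C, HasGradientAt h (g x) x) :
    ∀ x ∈ C, ∀ y ∈ C, h y ≥ h x + ⟪g x, y - x⟫_ℝ + μ / 2 * ‖y - x‖ ^ 2 := by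
  intro x hx y hy
  set v := y - x
  have hxv : x + v = y := add_sub_cancel x y
  have hseg : ∀ s ∈ Icc (0 : ℝ) 1, x + s • v ∈ C := fun s hs => hC.add_smul_sub_mem hx hy hs
  set Φ : ℝ → ℝ := fun s => h (x + s • v) - s * ⟪g x, v⟫_ℝ - μ / 2 * s ^ 2 * ‖v‖ ^ 2
  have hΦ : ∀ s ∈ Icc (0 : ℝ) 1,
      HasDerivAt Φ (⟪g (x + s • v), v⟫_ℝ - ⟪g x, v⟫_ℝ - μ * s * ‖v‖ ^ 2) s := by
    intro s hs
    have hline : HasDerivAt (fun r : ℝ => x + r • v) v s := by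
      simpa using ((hasDerivAt_id s).smul_const v).const_add x
    have hh := (hgrad _ (hseg s hs)).hasFDerivAt.comp_hasDerivAt s hline
    rw [InnerProductSpace.toDual_apply_apply] at hh
    refine ((hh.sub ((hasDerivAt_id s).mul_const ⟪g x, v⟫_ℝ)).sub
      (((hasDerivAt_pow 2 s).const_mul (μ / 2)).mul_const (‖v‖ ^ 2))).congr_deriv ?_
    simp only [Nat.cast_ofNat, one_mul]
    ring
  have hmono : MonotoneOn Φ (Icc 0 1) := by
    refine monotoneOn_of_hasDerivWithinAt_nonneg (convex_Icc 0 1)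
      (fun s hs => (hΦ s hs).continuousAt.continuousWithinAt)
      (fun s hs => (hΦ s (interior_subset hs)).hasDerivWithinAt) fun s hs => ?_
    rw [interior_Icc] at hs
    have hstep := hg.mul_le_inner hx (hseg s (Ioo_subset_Icc_self hs))
      (add_sub_cancel_left x _) hs.1
    rw [inner_sub_left] at hstep
    linarith
  have hΦ01 := hmono (left_mem_Icc.2 zero_le_one) (right_mem_Icc.2 zero_le_one) zero_le_one
  norm_num [Φ, hxv] at hΦ01
  linarith

end StrongMonotoneOn

theorem IsCompact.exists_forall_strongMonotoneOn_ball {K : Set E} (hK : IsCompact K)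
    (hloc : ∀ x ∈ K, ∃ δ > 0, ∃ μ > 0, StrongMonotoneOn g μ (ball x δ)) :
    ∃ ε > 0, ∀ x ∈ K, StrongMonotoneOn g ε (ball x ε) := by
  have hev : ∀ᶠ ε in 𝓝 (0 : ℝ), ∀ x ∈ K, StrongMonotoneOn g ε (ball x ε) := by
    refine hK.eventually_forall_of_forall_eventually fun x hx => ?_
    obtain ⟨δ, hδ, μ, hμ, hg⟩ := hloc x hx
    have hnhds : Iio (min (δ / 2) μ) ×ˢ ball x (δ / 2) ∈ 𝓝 ((0 : ℝ), x) :=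
      prod_mem_nhds (Iio_mem_nhds (by positivity)) (ball_mem_nhds x (by positivity))
    filter_upwards [hnhds] with ⟨ε, z⟩ ⟨hε, hz⟩
    refine hg.mono (hε.le.trans (min_le_right _ _)) (ball_subset_ball' ?_)
    have hεδ : ε < δ / 2 := hε.trans_le (min_le_left _ _)
    rw [mem_ball] at hz
    linarith
  obtain ⟨ε, hε, hpos⟩ :=
    ((hev.filter_mono nhdsWithin_le_nhds).and (self_mem_nhdsWithin : Ioi 0 ∈ 𝓝[>] (0 : ℝ))).exists
  exact ⟨ε, hpos, hε⟩

end InnerProductSpace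

theorem stmt4_general {n : ℕ} (h : EuclideanSpace ℝ (Fin n) → ℝ)
    (g : EuclideanSpace ℝ (Fin n) → EuclideanSpace ℝ (Fin n))
    (hgrad : ∀ x, HasGradientAt h (g x) x)
    (hloc : ∀ x : EuclideanSpace ℝ (Fin n), ∃ δ > (0 : ℝ), ∃ μ > (0 : ℝ),
      StrongConvexOnSet h g μ (ball x δ))
    (S : Set (EuclideanSpace ℝ (Fin n)))
    (hSconv : Convex ℝ S) (hScpt : IsCompact S) :
    ∃ μ > (0 : ℝ), StrongConvexOnSet h g μ S := by
  have hlocMono : ∀ x ∈ S, ∃ δ > 0, ∃ μ > 0, StrongMonotoneOn g μ (ball x δ) := fun x _ =>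
    let ⟨δ, hδ, μ, hμ, hconv⟩ := hloc x
    ⟨δ, hδ, μ, hμ, strongMonotoneOn_of_strongConvex hconv⟩
  obtain ⟨ε, hε, hball⟩ := hScpt.exists_forall_strongMonotoneOn_ball hlocMono
  have hmono : StrongMonotoneOn g ε S :=
    .of_forall_inter_ball hSconv hε fun x hx => (hball x hx).mono le_rfl inter_subset_right
  exact ⟨ε, hε, hmono.strongConvex hSconv fun x _ => hgrad x⟩

theorem stmt4 {n : ℕ} (h : EuclideanSpace ℝ (Fin n) → ℝ)
    (g : EuclideanSpace ℝ (Fin n) → EuclideanSpace ℝ (Fin n))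
    (hsmooth : ContDiff ℝ 1 h)
    (hgrad : ∀ x, HasGradientAt h (g x) x)
    (hloc : ∀ x : EuclideanSpace ℝ (Fin n), ∃ δ > (0 : ℝ), ∃ μ > (0 : ℝ),
      StrongConvexOnSet h g μ (ball x δ))
    (S : Set (EuclideanSpace ℝ (Fin n))) (hSne : S.Nonempty)
    (hSconv : Convex ℝ S) (hScpt : IsCompact S) :
    ∃ μ > (0 : ℝ), StrongConvexOnSet h g μ S :=
  stmt4_general h g hgrad hloc S hSconv hScpt
end

section
/- Let h : ℝⁿ → ℝ be continuously differentiable and convex, satisfying the KL inequality locally at every point (as in the previous statement), and let S ⊆ ℝⁿ be compact. Then there exist uniform constants ϑ_S ∈ (0,1) and ρ_S > 0 such that (h(x) − h*)^{ϑ_S} ≤ ρ_S‖∇h(x)‖ for all x ∈ S. -/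
/-!
Cover the compact set by finitely many balls carrying local KL constants `(ϑᵢ, ρᵢ)` and take
`ϑ_S = max ϑᵢ`. Since `h - h*` is bounded on `S` by some `C`, raising the exponent from `ϑᵢ`
to `ϑ_S` costs at most the factor `κᵢ = C ^ (ϑ_S - ϑᵢ)`, so `ρ_S = max κᵢ ρᵢ` works on all of `S`.
-/

open Set Metric Filter Topology

lemma rpow_le_rpow_sub_mul_rpow {a C ϑ ϑ' : ℝ} (ha : 0 ≤ a) (haC : a ≤ C) (hϑϑ' : ϑ ≤ ϑ')
    (hϑ' : ϑ' ≠ 0) : a ^ ϑ' ≤ C ^ (ϑ' - ϑ) * a ^ ϑ := by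
  calc a ^ ϑ' = a ^ (ϑ' - ϑ) * a ^ ϑ := by
        rw [← Real.rpow_add' ha (by simpa using hϑ'), sub_add_cancel]
    _ ≤ C ^ (ϑ' - ϑ) * a ^ ϑ := by gcongr

lemma Finset.exists_mem_forall_le_of_forall_mem {ι α : Type*} [LinearOrder α] (t : Finset ι)
    {f : ι → α} {s : Set α} {a : α} (ha : a ∈ s) (hf : ∀ i ∈ t, f i ∈ s) :
    ∃ c ∈ s, ∀ i ∈ t, f i ≤ c := by
  classical
  set u := insert a (t.image f)
  refine ⟨u.max' (insert_nonempty _ _), ?_, fun i hi ↦ u.le_max' _ ?_⟩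
  · rcases mem_insert.1 (u.max'_mem (insert_nonempty _ _)) with hmax | hmax
    · rw [hmax]; exact ha
    · obtain ⟨i, hi, hfi⟩ := mem_image.1 hmax
      rw [← hfi]; exact hf i hi
  · exact mem_insert_of_mem (mem_image_of_mem f hi)

section KL

variable {X E : Type*} [SeminormedAddGroup E]

/-- `φ` stands for `h - h*` and `g` for `∇h`. -/
def KLIneqOn (φ : X → ℝ) (g : X → E) (ϑ ρ : ℝ) (U : Set X) : Prop :=
  ∀ x ∈ U, φ x ^ ϑ ≤ ρ * ‖g x‖

variable {φ : X → ℝ} {g : X → E} {ϑ ϑ' ρ ρ' : ℝ} {U V : Set X}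

lemma KLIneqOn.mono (hKL : KLIneqOn φ g ϑ ρ U) (hVU : V ⊆ U) (hρ : ρ ≤ ρ') :
    KLIneqOn φ g ϑ ρ' V :=
  fun x hx ↦ (hKL x (hVU hx)).trans (by gcongr)

lemma KLIneqOn.rpow_sub_mul_of_le {C : ℝ} (hKL : KLIneqOn φ g ϑ ρ U)
    (hφ₀ : ∀ x ∈ U, 0 ≤ φ x) (hφC : ∀ x ∈ U, φ x ≤ C) (hϑϑ' : ϑ ≤ ϑ') (hϑ' : ϑ' ≠ 0) :
    KLIneqOn φ g ϑ' (C ^ (ϑ' - ϑ) * ρ) U := fun x hx ↦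
  calc φ x ^ ϑ' ≤ C ^ (ϑ' - ϑ) * φ x ^ ϑ :=
        rpow_le_rpow_sub_mul_rpow (hφ₀ x hx) (hφC x hx) hϑϑ' hϑ'
    _ ≤ C ^ (ϑ' - ϑ) * (ρ * ‖g x‖) := by
        have := Real.rpow_nonneg ((hφ₀ x hx).trans (hφC x hx)) (ϑ' - ϑ)
        gcongr
        exact hKL x hx
    _ = C ^ (ϑ' - ϑ) * ρ * ‖g x‖ := by ring

lemma KLIneqOn.of_finite_cover {ι : Type*} {S : Set X} (t : Finset ι) (U : ι → Set X)
    (hSU : S ⊆ ⋃ i ∈ t, U i) (hφ₀ : ∀ x ∈ S, 0 ≤ φ x) (hφ : BddAbove (φ '' S)) (ϑ ρ : ι → ℝ)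
    (hϑ : ∀ i ∈ t, ϑ i ∈ Ioo 0 1) (hKL : ∀ i ∈ t, KLIneqOn φ g (ϑ i) (ρ i) (U i)) :
    ∃ ϑ ∈ Ioo (0 : ℝ) 1, ∃ ρ > (0 : ℝ), KLIneqOn φ g ϑ ρ S := by
  obtain ⟨C, hC⟩ := hφ
  have hφC : ∀ x ∈ S, φ x ≤ C := fun x hx ↦ hC (mem_image_of_mem φ hx)
  obtain ⟨ϑS, hϑS, hϑle⟩ :=
    t.exists_mem_forall_le_of_forall_mem (by norm_num : (1 / 2 : ℝ) ∈ Ioo 0 1) hϑ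
  obtain ⟨R, hR⟩ := (t.image fun i ↦ C ^ (ϑS - ϑ i) * ρ i).exists_le
  refine ⟨ϑS, hϑS, max R 1, by positivity, fun x hx ↦ ?_⟩
  obtain ⟨i, hi, hxi⟩ := mem_iUnion₂.1 (hSU hx)
  have hKLi : KLIneqOn φ g (ϑ i) (ρ i) (U i ∩ S) := (hKL i hi).mono inter_subset_left le_rfl
  refine (hKLi.rpow_sub_mul_of_le (fun y hy ↦ hφ₀ y hy.2) (fun y hy ↦ hφC y hy.2) (hϑle i hi)
    hϑS.1.ne').mono subset_rfl ?_ x ⟨hxi, hx⟩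
  exact (hR _ (Finset.mem_image_of_mem _ hi)).trans (le_max_left _ _)

lemma IsCompact.exists_klIneqOn [TopologicalSpace X] {S : Set X} (hS : IsCompact S)
    (hφ₀ : ∀ x ∈ S, 0 ≤ φ x) (hφ : BddAbove (φ '' S))
    (hloc : ∀ x ∈ S, ∃ U ∈ 𝓝 x, ∃ ϑ ∈ Ioo (0 : ℝ) 1, ∃ ρ, KLIneqOn φ g ϑ ρ U) :
    ∃ ϑ ∈ Ioo (0 : ℝ) 1, ∃ ρ > (0 : ℝ), KLIneqOn φ g ϑ ρ S := by
  choose U hU ϑ hϑ ρ hKL using hloc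
  obtain ⟨t, hSU⟩ := hS.elim_nhds_subcover' U hU
  exact KLIneqOn.of_finite_cover t (fun x ↦ U x x.2) hSU hφ₀ hφ (fun x ↦ ϑ x x.2)
    (fun x ↦ ρ x x.2) (fun x _ ↦ hϑ x x.2) fun x _ ↦ hKL x x.2

end KL

theorem stmt9_general {n : ℕ} (h : EuclideanSpace ℝ (Fin n) → ℝ)
    (g : EuclideanSpace ℝ (Fin n) → EuclideanSpace ℝ (Fin n))
    (hsmooth : ContDiff ℝ 1 h)
    (hstar : ℝ)
    (hlow : ∀ x, hstar ≤ h x)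
    (hKL : ∀ xb : EuclideanSpace ℝ (Fin n),
      ∃ ρ > (0 : ℝ), ∃ δ > (0 : ℝ), ∃ ϑ ∈ Set.Ioo (0 : ℝ) 1,
        ∀ x ∈ ball xb δ, (h x - hstar) ^ ϑ ≤ ρ * ‖g x‖)
    (S : Set (EuclideanSpace ℝ (Fin n))) (hScpt : IsCompact S) :
    ∃ ϑ ∈ Set.Ioo (0 : ℝ) 1, ∃ ρ > (0 : ℝ),
      ∀ x ∈ S, (h x - hstar) ^ ϑ ≤ ρ * ‖g x‖ := by
  have hlocal : ∀ x ∈ S, ∃ U ∈ 𝓝 x, ∃ ϑ ∈ Ioo (0 : ℝ) 1, ∃ ρ,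
      KLIneqOn (fun y ↦ h y - hstar) g ϑ ρ U := fun x _ ↦ by
    obtain ⟨ρ, -, δ, hδ, ϑ, hϑ, hball⟩ := hKL x
    exact ⟨ball x δ, ball_mem_nhds x hδ, ϑ, hϑ, ρ, hball⟩
  exact hScpt.exists_klIneqOn (fun x _ ↦ sub_nonneg.2 (hlow x))
    (hScpt.bddAbove_image (hsmooth.continuous.sub continuous_const).continuousOn) hlocal

theorem stmt9 {n : ℕ} (h : EuclideanSpace ℝ (Fin n) → ℝ)
    (g : EuclideanSpace ℝ (Fin n) → EuclideanSpace ℝ (Fin n))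
    (hsmooth : ContDiff ℝ 1 h)
    (hgrad : ∀ x, HasGradientAt h (g x) x)
    (hconv : ConvexOn ℝ Set.univ h)
    (hstar : ℝ)
    (hlow : ∀ x, hstar ≤ h x)
    (hattain : ∃ x, h x = hstar)
    (hKL : ∀ xb : EuclideanSpace ℝ (Fin n),
      ∃ ρ > (0 : ℝ), ∃ δ > (0 : ℝ), ∃ ϑ ∈ Set.Ioo (0 : ℝ) 1,
        ∀ x ∈ ball xb δ, (h x - hstar) ^ ϑ ≤ ρ * ‖g x‖)
    (S : Set (EuclideanSpace ℝ (Fin n))) (hScpt : IsCompact S) :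
    ∃ ϑ ∈ Set.Ioo (0 : ℝ) 1, ∃ ρ > (0 : ℝ),
      ∀ x ∈ S, (h x - hstar) ^ ϑ ≤ ρ * ‖g x‖ :=
  stmt9_general h g hsmooth hstar hlow hKL S hScpt
end

section
/- Let f : ℝⁿ → ℝ be convex and differentiable, and suppose f is (ν, L)-Hölder smooth on a convex set Ω containing x^k and x^{k+1}, where x^{k+1} = x^k − α‖∇f(x^k)‖^{(1−ν)/ν}∇f(x^k) with 0 < α ≤ ((1+ν)/L)^{1/ν}. Then f(x^{k+1}) ≤ f(x^k) − (α − (L/(1+ν))α^{1+ν})‖∇f(x^k)‖^{(1+ν)/ν}, and in particular f(x^{k+1}) ≤ f(x^k). -/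
/-!
Along the segment from `x` to `y`, the gap between `f` and the Hölder model
`f x + ⟪g x, y - x⟫ + L/(1+ν) ‖y - x‖^(1+ν)` has derivative
`⟪g(x + t d) - g x, d⟫ - L ‖d‖^(1+ν) t^ν ≤ 0`, which gives the descent inequality.
For the step `d = -α ‖g‖^((1-ν)/ν) g` the model evaluates to
`-(α - L/(1+ν) α^(1+ν)) ‖g‖^((1+ν)/ν)`, and the bound on `α` is exactly `L α^ν ≤ 1 + ν`,
i.e. the coefficient is nonnegative.
-/

open Set
open scoped InnerProductSpace

theorem Real.rpow_one_sub_div_mul_self {G ν : ℝ} (hG : 0 ≤ G) (hν : ν ≠ 0) :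
    G ^ ((1 - ν) / ν) * G = G ^ (1 / ν) := by
  have hsum : (1 - ν) / ν + 1 = 1 / ν := by field_simp; ring
  rw [← hsum, Real.rpow_add' hG (by rw [hsum]; simp [hν]), Real.rpow_one]

theorem sub_div_mul_rpow_nonneg {L ν α : ℝ} (hL : 0 < L) (hν : 0 < ν) (hα0 : 0 ≤ α)
    (hα : α ≤ ((1 + ν) / L) ^ (1 / ν)) : 0 ≤ α - L / (1 + ν) * α ^ (1 + ν) := by
  have hν1 : 0 < 1 + ν := by linarith
  have hαν : α ^ ν ≤ (1 + ν) / L := by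
    rwa [one_div, Real.le_rpow_inv_iff_of_pos hα0 (by positivity) hν] at hα
  rw [Real.rpow_add' hα0 hν1.ne', Real.rpow_one, sub_nonneg, div_mul_eq_mul_div,
    div_le_iff₀ hν1]
  rw [le_div_iff₀ hL] at hαν
  nlinarith

section InnerProductSpace

variable {E : Type*} [NormedAddCommGroup E] [InnerProductSpace ℝ E]

theorem inner_neg_smul_add_rpow_norm (v : E) (L : ℝ) {α ν : ℝ} (hα : 0 ≤ α) (hν : 0 < ν) :
    ⟪v, -((α * ‖v‖ ^ ((1 - ν) / ν)) • v)⟫_ℝ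
        + L / (1 + ν) * ‖-((α * ‖v‖ ^ ((1 - ν) / ν)) • v)‖ ^ (1 + ν)
      = -((α - L / (1 + ν) * α ^ (1 + ν)) * ‖v‖ ^ ((1 + ν) / ν)) := by
  set G := ‖v‖
  have hG : 0 ≤ G := norm_nonneg v
  have hstep : α * G ^ ((1 - ν) / ν) * G = α * G ^ (1 / ν) := by
    rw [mul_assoc, Real.rpow_one_sub_div_mul_self hG hν.ne']
  have hinner : ⟪v, -((α * G ^ ((1 - ν) / ν)) • v)⟫_ℝ = -(α * G ^ ((1 + ν) / ν)) := by
    rw [inner_neg_right, real_inner_smul_right, real_inner_self_eq_norm_sq, sq, ← mul_assoc,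
      hstep, mul_assoc, ← Real.rpow_add_one' hG (by positivity)]
    congr 3
    field_simp
  have hnorm : ‖-((α * G ^ ((1 - ν) / ν)) • v)‖ ^ (1 + ν) = α ^ (1 + ν) * G ^ ((1 + ν) / ν) := by
    rw [norm_neg, norm_smul, Real.norm_of_nonneg (by positivity), hstep,
      Real.mul_rpow hα (by positivity), ← Real.rpow_mul hG, one_div_mul_eq_div]
  rw [hinner, hnorm]
  ring

theorem real_inner_le_mul_rpow_of_norm_le {u d : E} {L ν t : ℝ} (hν : 1 + ν ≠ 0) (ht : 0 ≤ t)
    (hu : ‖u‖ ≤ L * ‖t • d‖ ^ ν) : ⟪u, d⟫_ℝ ≤ L * ‖d‖ ^ (1 + ν) * t ^ ν := by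
  rw [norm_smul, Real.norm_of_nonneg ht, Real.mul_rpow ht (norm_nonneg d)] at hu
  calc ⟪u, d⟫_ℝ ≤ ‖u‖ * ‖d‖ := real_inner_le_norm u d
    _ ≤ L * (t ^ ν * ‖d‖ ^ ν) * ‖d‖ := mul_le_mul_of_nonneg_right hu (norm_nonneg d)
    _ = L * ‖d‖ ^ (1 + ν) * t ^ ν := by
      rw [Real.rpow_add' (norm_nonneg d) hν, Real.rpow_one]
      ring

variable [CompleteSpace E]

theorem HasGradientAt.hasDerivAt_comp_add_smul {f : E → ℝ} {g x d : E} {t : ℝ}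
    (h : HasGradientAt f g (x + t • d)) :
    HasDerivAt (fun s : ℝ => f (x + s • d)) ⟪g, d⟫_ℝ t := by
  have hline : HasDerivAt (fun s : ℝ => x + s • d) d t := by
    simpa using ((hasDerivAt_id t).smul_const d).const_add x
  have := h.hasFDerivAt.comp_hasDerivAt t hline
  rwa [InnerProductSpace.toDual_apply_apply] at this

theorem Convex.le_add_inner_add_rpow_of_gradient_holder {Ω : Set E} (hΩ : Convex ℝ Ω)
    {L ν : ℝ} (hν : 0 ≤ ν) {f : E → ℝ} {g : E → E}
    (hgrad : ∀ x ∈ Ω, HasGradientAt f (g x) x)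
    (hhold : ∀ x ∈ Ω, ∀ y ∈ Ω, ‖g x - g y‖ ≤ L * ‖x - y‖ ^ ν)
    {x y : E} (hx : x ∈ Ω) (hy : y ∈ Ω) :
    f y ≤ f x + ⟪g x, y - x⟫_ℝ + L / (1 + ν) * ‖y - x‖ ^ (1 + ν) := by
  set d := y - x
  have hν1 : 0 < 1 + ν := by linarith
  have hseg : ∀ t ∈ Icc (0 : ℝ) 1, x + t • d ∈ Ω := fun t ht => by
    simpa [d, smul_sub, add_sub_assoc', add_comm] using
      hΩ.add_smul_sub_mem hx hy ht
  set φ : ℝ → ℝ := fun t =>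
    f (x + t • d) - t * ⟪g x, d⟫_ℝ - L / (1 + ν) * ‖d‖ ^ (1 + ν) * t ^ (1 + ν)
  have hφ' : ∀ t ∈ Icc (0 : ℝ) 1, HasDerivAt φ
      (⟪g (x + t • d), d⟫_ℝ - ⟪g x, d⟫_ℝ - L * ‖d‖ ^ (1 + ν) * t ^ ν) t := by
    intro t ht
    have hpow := Real.hasDerivAt_rpow_const (x := t) (p := 1 + ν) (Or.inr (by linarith))
    refine ((((hgrad _ (hseg t ht)).hasDerivAt_comp_add_smul).sub
      ((hasDerivAt_id t).mul_const ⟪g x, d⟫_ℝ)).sub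
      (hpow.const_mul (L / (1 + ν) * ‖d‖ ^ (1 + ν)))).congr_deriv ?_
    rw [add_sub_cancel_left]
    field_simp
  have hanti : AntitoneOn φ (Icc 0 1) := by
    refine antitoneOn_of_hasDerivWithinAt_nonpos (convex_Icc 0 1)
      (fun t ht => (hφ' t ht).continuousAt.continuousWithinAt)
      (fun t ht => (hφ' t (interior_subset ht)).hasDerivWithinAt) fun t ht => ?_
    rw [interior_Icc] at ht
    have hhold_t := hhold _ (hseg t (Ioo_subset_Icc_self ht)) _ hx
    rw [add_sub_cancel_left] at hhold_t
    have hbound := real_inner_le_mul_rpow_of_norm_le hν1.ne' ht.1.le hhold_t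
    rw [inner_sub_left] at hbound
    linarith
  have := hanti (left_mem_Icc.2 zero_le_one) (right_mem_Icc.2 zero_le_one) zero_le_one
  simp only [φ, zero_smul, add_zero, one_smul, zero_mul, sub_zero, one_mul,
    Real.zero_rpow hν1.ne', mul_zero, Real.one_rpow, mul_one] at this
  simp only [d, add_sub_cancel] at this ⊢
  linarith

end InnerProductSpace

theorem stmt10_general {n : ℕ} (Ω : Set (EuclideanSpace ℝ (Fin n))) (hΩconv : Convex ℝ Ω)
    (L ν : ℝ) (hL : 0 < L) (hν : ν ∈ Set.Ioc (0 : ℝ) 1)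
    (f : EuclideanSpace ℝ (Fin n) → ℝ)
    (g : EuclideanSpace ℝ (Fin n) → EuclideanSpace ℝ (Fin n))
    (hgrad : ∀ x, HasGradientAt f (g x) x)
    (hhold : ∀ x ∈ Ω, ∀ y ∈ Ω, ‖g x - g y‖ ≤ L * ‖x - y‖ ^ ν)
    (xk xk1 : EuclideanSpace ℝ (Fin n)) (hxk : xk ∈ Ω) (hxk1 : xk1 ∈ Ω)
    (α : ℝ) (hα0 : 0 < α) (hα1 : α ≤ ((1 + ν) / L) ^ (1 / ν))
    (hupd : xk1 = xk - (α * ‖g xk‖ ^ ((1 - ν) / ν)) • g xk) :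
    f xk1 ≤ f xk - (α - L / (1 + ν) * α ^ (1 + ν)) * ‖g xk‖ ^ ((1 + ν) / ν) ∧
      f xk1 ≤ f xk := by
  have hν0 : 0 < ν := hν.1
  have hstep : xk1 - xk = -((α * ‖g xk‖ ^ ((1 - ν) / ν)) • g xk) := by
    rw [hupd, sub_sub_cancel_left]
  have hdescent := hΩconv.le_add_inner_add_rpow_of_gradient_holder hν0.le
    (fun x _ => hgrad x) hhold hxk hxk1
  rw [hstep, add_assoc, inner_neg_smul_add_rpow_norm _ _ hα0.le hν0] at hdescent
  have hdecrease : 0 ≤ (α - L / (1 + ν) * α ^ (1 + ν)) * ‖g xk‖ ^ ((1 + ν) / ν) :=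
    mul_nonneg (sub_div_mul_rpow_nonneg hL hν0 hα0.le hα1) (by positivity)
  exact ⟨by linarith, by linarith⟩

theorem stmt10 {n : ℕ} (Ω : Set (EuclideanSpace ℝ (Fin n))) (hΩconv : Convex ℝ Ω)
    (L ν : ℝ) (hL : 0 < L) (hν : ν ∈ Set.Ioc (0 : ℝ) 1)
    (f : EuclideanSpace ℝ (Fin n) → ℝ)
    (g : EuclideanSpace ℝ (Fin n) → EuclideanSpace ℝ (Fin n))
    (hgrad : ∀ x, HasGradientAt f (g x) x)
    (hconv : ConvexOn ℝ Set.univ f)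
    (hhold : ∀ x ∈ Ω, ∀ y ∈ Ω, ‖g x - g y‖ ≤ L * ‖x - y‖ ^ ν)
    (xk xk1 : EuclideanSpace ℝ (Fin n)) (hxk : xk ∈ Ω) (hxk1 : xk1 ∈ Ω)
    (α : ℝ) (hα0 : 0 < α) (hα1 : α ≤ ((1 + ν) / L) ^ (1 / ν))
    (hupd : xk1 = xk - (α * ‖g xk‖ ^ ((1 - ν) / ν)) • g xk) :
    f xk1 ≤ f xk - (α - L / (1 + ν) * α ^ (1 + ν)) * ‖g xk‖ ^ ((1 + ν) / ν) ∧
      f xk1 ≤ f xk :=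
  stmt10_general Ω hΩconv L ν hL hν f g hgrad hhold xk xk1 hxk hxk1 α hα0 hα1 hupd
end
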